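/- Let A ∈ ℝ^{m×n}, C ∈ ℝ^{m×l} of full column rank, R ∈ ℝ^{l×n} of full row rank, and M = C†AR†. Then ‖A − CMR‖ ≤ ‖(I − CC†)A‖ + ‖(I − P_Y)A(I − R†R)‖ for any matrix P_Y with P_Y · ARᵀ(RRᵀ)^{-1}Πᵀ = P_Y, where R = ΠᵀA for a selection matrix Π; in particular ‖A − CMR‖ ≤ ‖(I − CC†)A‖ + ‖I − P_Y‖·‖(I − YY†)A‖ when P_Y = Y(ΠᵀY)^{-1}Πᵀ with ΠᵀY invertible. -/

import Mathlib

open scoped Matrix.Norms.L2Operator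
open Matrix

def IsMoorePenrose {m n : ℕ} (A : Matrix (Fin m) (Fin n) ℝ) (B : Matrix (Fin n) (Fin m) ℝ) : Prop :=
  A * B * A = A ∧ B * A * B = B ∧ (A * B)ᵀ = A * B ∧ (B * A)ᵀ = B * A

def IsSelection {m l : ℕ} (P : Matrix (Fin m) (Fin l) ℝ) : Prop :=
  ∃ f : Fin l → Fin m, Function.Injective f ∧ P = Matrix.of fun i j => if i = f j then 1 else 0

lemma aux_isUnit_of_rank {l : ℕ} (B : Matrix (Fin l) (Fin l) ℝ) (h : B.rank = l) : IsUnit B := by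
  rw [← Matrix.mulVec_surjective_iff_isUnit]
  have htop : LinearMap.range B.mulVecLin = ⊤ := by
    apply Submodule.eq_top_of_finrank_eq
    simpa [Matrix.rank] using h
  have := LinearMap.range_eq_top.mp htop
  intro y
  obtain ⟨x, hx⟩ := this y
  exact ⟨x, hx⟩

lemma aux_proj_norm_le {k : ℕ} (P : Matrix (Fin k) (Fin k) ℝ) (hsym : Pᵀ = P)
    (hid : P * P = P) : ‖P‖ ≤ 1 := by
  have h := Matrix.l2_opNorm_conjTranspose_mul_self P
  rw [Matrix.conjTranspose_eq_transpose_of_trivial, hsym, hid] at h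
  nlinarith [norm_nonneg P]

theorem stmt18 {m n l : ℕ} (A : Matrix (Fin m) (Fin n) ℝ)
    (Pc : Matrix (Fin n) (Fin l) ℝ)
    (C : Matrix (Fin m) (Fin l) ℝ) (hC : C = A * Pc) (hCrank : C.rank = l)
    (Pr : Matrix (Fin m) (Fin l) ℝ) (hPr : IsSelection Pr)
    (R : Matrix (Fin l) (Fin n) ℝ) (hR : R = Prᵀ * A) (hRrank : R.rank = l)
    (Y : Matrix (Fin m) (Fin l) ℝ) (hinv : IsUnit (Prᵀ * Y))
    (Cd : Matrix (Fin l) (Fin m) ℝ) (hCd : IsMoorePenrose C Cd)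
    (Rd : Matrix (Fin n) (Fin l) ℝ) (hRd : IsMoorePenrose R Rd)
    (Yd : Matrix (Fin l) (Fin m) ℝ) (hYd : IsMoorePenrose Y Yd)
    (M : Matrix (Fin l) (Fin l) ℝ) (hM : M = Cd * A * Rd)
    (PY : Matrix (Fin m) (Fin m) ℝ) (hPY : PY = Y * (Prᵀ * Y)⁻¹ * Prᵀ) :
    (∀ Q : Matrix (Fin m) (Fin m) ℝ, Q * (A * Rᵀ * (R * Rᵀ)⁻¹ * Prᵀ) = Q →
      ‖A - C * M * R‖ ≤ ‖(1 - C * Cd) * A‖ + ‖(1 - Q) * A * (1 - Rd * R)‖) ∧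
    ‖A - C * M * R‖ ≤ ‖(1 - C * Cd) * A‖ +
      ‖(1 : Matrix (Fin m) (Fin m) ℝ) - PY‖ * ‖(1 - Y * Yd) * A‖ := by
  obtain ⟨hC1, hC2, hC3, hC4⟩ := hCd
  obtain ⟨hR1, hR2, hR3, hR4⟩ := hRd
  obtain ⟨hY1, hY2, hY3, hY4⟩ := hYd
  -- decomposition
  have key : A - C * M * R = (1 - C * Cd) * A + (C * Cd) * (A * (1 - Rd * R)) := by
    rw [hM]
    simp only [Matrix.sub_mul, Matrix.mul_sub, Matrix.one_mul, Matrix.mul_one, Matrix.mul_assoc]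
    abel
  -- C*Cd is an orthogonal projection
  have hCCd : ‖C * Cd‖ ≤ 1 := by
    apply aux_proj_norm_le _ hC3
    calc (C * Cd) * (C * Cd) = (C * Cd * C) * Cd := by simp only [Matrix.mul_assoc]
    _ = C * Cd := by rw [hC1]
  -- 1 - Rd*R is an orthogonal projection
  have hRdR : ‖(1 : Matrix (Fin n) (Fin n) ℝ) - Rd * R‖ ≤ 1 := by
    apply aux_proj_norm_le
    · rw [Matrix.transpose_sub, Matrix.transpose_one, hR4]
    · have : (Rd * R) * (Rd * R) = Rd * R := by
        calc (Rd * R) * (Rd * R) = Rd * (R * Rd * R) := by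
              simp only [Matrix.mul_assoc]
        _ = Rd * R := by rw [hR1]
      simp only [Matrix.sub_mul, Matrix.mul_sub, Matrix.one_mul, Matrix.mul_one, this]
      abel
  -- main bound for any admissible Q
  have main : ∀ Q : Matrix (Fin m) (Fin m) ℝ, Q * (A * Rᵀ * (R * Rᵀ)⁻¹ * Prᵀ) = Q →
      ‖A - C * M * R‖ ≤ ‖(1 - C * Cd) * A‖ + ‖(1 - Q) * A * (1 - Rd * R)‖ := by
    intro Q hQ
    have hQA : Q * A = Q * (A * Rᵀ * (R * Rᵀ)⁻¹) * R := by
      conv_lhs => rw [← hQ]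
      rw [hR]
      simp only [Matrix.mul_assoc]
    have hR1' : R * (Rd * R) = R := by rw [← Matrix.mul_assoc, hR1]
    have hQAR : Q * (A * (Rd * R)) = Q * A := by
      calc Q * (A * (Rd * R)) = Q * A * (Rd * R) := (Matrix.mul_assoc _ _ _).symm
        _ = Q * (A * Rᵀ * (R * Rᵀ)⁻¹) * R * (Rd * R) := by rw [hQA]
        _ = Q * (A * Rᵀ * (R * Rᵀ)⁻¹) * (R * (Rd * R)) := Matrix.mul_assoc _ _ _
        _ = Q * (A * Rᵀ * (R * Rᵀ)⁻¹) * R := by rw [hR1']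
        _ = Q * A := hQA.symm
    have hfix : (1 - Q) * A * (1 - Rd * R) = A * (1 - Rd * R) := by
      simp only [Matrix.sub_mul, Matrix.mul_sub, Matrix.one_mul, Matrix.mul_one, Matrix.mul_assoc,
        hQAR]
      abel
    calc ‖A - C * M * R‖ = ‖(1 - C * Cd) * A + (C * Cd) * (A * (1 - Rd * R))‖ := by rw [key]
      _ ≤ ‖(1 - C * Cd) * A‖ + ‖(C * Cd) * (A * (1 - Rd * R))‖ := norm_add_le _ _
      _ ≤ ‖(1 - C * Cd) * A‖ + ‖C * Cd‖ * ‖A * (1 - Rd * R)‖ := by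
          gcongr
          exact Matrix.l2_opNorm_mul _ _
      _ ≤ ‖(1 - C * Cd) * A‖ + 1 * ‖A * (1 - Rd * R)‖ := by
          gcongr
      _ = ‖(1 - C * Cd) * A‖ + ‖(1 - Q) * A * (1 - Rd * R)‖ := by
          rw [one_mul, hfix]
  refine ⟨main, ?_⟩
  -- part 2
  have hRRt : IsUnit (R * Rᵀ) := by
    apply aux_isUnit_of_rank
    rw [Matrix.rank_self_mul_transpose, hRrank]
  have hRRtdet : IsUnit (R * Rᵀ).det := (Matrix.isUnit_iff_isUnit_det _).mp hRRt
  have hPYdet : IsUnit (Prᵀ * Y).det := (Matrix.isUnit_iff_isUnit_det _).mp hinv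
  have hPYQ : PY * (A * Rᵀ * (R * Rᵀ)⁻¹ * Prᵀ) = PY := by
    rw [hPY]
    have h1 : Y * (Prᵀ * Y)⁻¹ * Prᵀ * (A * Rᵀ * (R * Rᵀ)⁻¹ * Prᵀ)
        = Y * (Prᵀ * Y)⁻¹ * ((Prᵀ * A * Rᵀ) * (R * Rᵀ)⁻¹) * Prᵀ := by
      simp only [Matrix.mul_assoc]
    rw [h1, ← hR, Matrix.mul_nonsing_inv _ hRRtdet, Matrix.mul_one]
  have step1 := main PY hPYQ
  -- PY * (Y * Yd) = Y * Yd
  have hPYY : PY * Y = Y := by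
    rw [hPY]
    calc Y * (Prᵀ * Y)⁻¹ * Prᵀ * Y = Y * ((Prᵀ * Y)⁻¹ * (Prᵀ * Y)) := by
          simp only [Matrix.mul_assoc]
    _ = Y := by rw [Matrix.nonsing_inv_mul _ hPYdet, Matrix.mul_one]
  have hfact : (1 - PY) * A * (1 - Rd * R) = (1 - PY) * ((1 - Y * Yd) * A) * (1 - Rd * R) := by
    have h2 : (1 - PY) * (1 - Y * Yd) = 1 - PY := by
      simp only [Matrix.sub_mul, Matrix.mul_sub, Matrix.one_mul, Matrix.mul_one]
      have : PY * (Y * Yd) = Y * Yd := by rw [← Matrix.mul_assoc, hPYY]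
      rw [this]
      abel
    rw [show (1 - PY) * ((1 - Y * Yd) * A) = ((1 - PY) * (1 - Y * Yd)) * A from
      (Matrix.mul_assoc _ _ _).symm, h2]
  have step2 : ‖(1 - PY) * A * (1 - Rd * R)‖ ≤
      ‖(1 : Matrix (Fin m) (Fin m) ℝ) - PY‖ * ‖(1 - Y * Yd) * A‖ := by
    rw [hfact]
    calc ‖(1 - PY) * ((1 - Y * Yd) * A) * (1 - Rd * R)‖
        ≤ ‖(1 - PY) * ((1 - Y * Yd) * A)‖ * ‖(1 : Matrix (Fin n) (Fin n) ℝ) - Rd * R‖ :=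
          Matrix.l2_opNorm_mul _ _
      _ ≤ ‖(1 - PY) * ((1 - Y * Yd) * A)‖ * 1 := by
          gcongr
      _ = ‖(1 - PY) * ((1 - Y * Yd) * A)‖ := mul_one _
      _ ≤ ‖(1 : Matrix (Fin m) (Fin m) ℝ) - PY‖ * ‖(1 - Y * Yd) * A‖ :=
          Matrix.l2_opNorm_mul _ _
  linarith
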